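/- In the insertion-elimination Lie algebra, for any positive integer $m$ and any rooted trees $s, t$ with $[D_s^+, D_t^+] \in \mathfrak{g}_{m+1}$ (i.e. $|s| + |t| = m+1$), the coefficient of $D_{\ell_{m+1}}^+$ in $[D_s^+, D_t^+]$ is zero, where $\ell_{m+1}$ denotes the ladder tree with $m+1$ vertices (the unique rooted tree on $m+1$ vertices of depth $m$). Consequently, $D_{\ell_{m+1}}^+$ does not lie in the subalgebra generated by $\bigoplus_{0 \le i \le m} \mathfrak{g}_i$, and the positive subalgebra $\mathfrak{g}^+$ is not finitely generated as a Lie algebra. -/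

import Mathlib

namespace IE

/-- A rooted tree: a root together with a list of subtrees. -/
inductive RTree : Type
  | node : List RTree → RTree

namespace RTree

/-- Number of vertices of a rooted tree. -/
def size : RTree → ℕ
  | node cs => 1 + (cs.attach.map (fun c => size c.1)).sum
decreasing_by
  have h1 := List.sizeOf_lt_of_mem c.2
  have h2 : sizeOf (RTree.node cs) = 1 + sizeOf cs := by simp
  omega

mutual
  /-- Positions (vertices) of a rooted tree, as index paths from the root. -/
  def pos : RTree → List (List ℕ)
    | node cs => [] :: posAux cs 0
  def posAux : List RTree → ℕ → List (List ℕ)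
    | [], _ => []
    | c :: cs, i => (pos c).map (i :: ·) ++ posAux cs (i + 1)
end

theorem root_mem_pos (t : RTree) : [] ∈ pos t := by
  cases t with
  | node cs => simp [pos]

/-- The subtree rooted at a given position. -/
def subtreeAt : List ℕ → RTree → RTree
  | [], t => t
  | i :: p, node cs =>
    match cs[i]? with
    | some c => subtreeAt p c
    | none => node cs

/-- The tree obtained by removing the subtree hanging at a given (non-root) position,
i.e. the root-side part `R_e` of the edge cut. -/
def removeAt : List ℕ → RTree → RTree
  | [], t => t
  | [i], node cs => node (cs.eraseIdx i)
  | i :: j :: p, node cs => node (cs.modify i (removeAt (j :: p)))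

/-- `graft v t s` attaches the root of `s` by a new edge to the vertex `v` of `t`
(the operation `t ∪_v s`). -/
def graft : List ℕ → RTree → RTree → RTree
  | [], node cs, s => node (cs ++ [s])
  | i :: p, node cs, s => node (cs.modify i (fun c => graft p c s))

/-- Adjacency of positions: one is the parent of the other. -/
def adj (p q : List ℕ) : Prop :=
  (p ≠ [] ∧ p.dropLast = q) ∨ (q ≠ [] ∧ q.dropLast = p)

/-- Rooted isomorphism: a bijection of vertex sets fixing the root and preserving
adjacency. -/
def Iso (s t : RTree) : Prop :=
  ∃ f : {p // p ∈ pos s} ≃ {p // p ∈ pos t},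
    (f ⟨[], root_mem_pos s⟩).1 = [] ∧
      ∀ p q : {p // p ∈ pos s}, adj p.1 q.1 ↔ adj (f p).1 (f q).1

/-- The number of root-fixing graph automorphisms of a rooted tree. -/
noncomputable def xi (t : RTree) : ℕ :=
  Nat.card {f : {p // p ∈ pos t} ≃ {p // p ∈ pos t} //
    (f ⟨[], root_mem_pos t⟩).1 = [] ∧
      ∀ p q : {p // p ∈ pos t}, adj p.1 q.1 ↔ adj (f p).1 (f q).1}

open Classical in
/-- `alpha t₁ t₂ t₃` = number of edges `e` of `t₂` (identified with the non-root
vertex below `e`) such that cutting `e` yields root part `R_e(t₂) ≅ t₃` and pruned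
part `P_e(t₂) ≅ t₁`. -/
noncomputable def alpha (t1 t2 t3 : RTree) : ℕ :=
  ((pos t2).filter fun v =>
    decide (v ≠ [] ∧ Iso (subtreeAt v t2) t1 ∧ Iso (removeAt v t2) t3)).length

open Classical in
/-- `beta t₁ t₂ t₃` = number of vertices `v` of `t₃` with `t₁ ≅ t₃ ∪_v t₂`. -/
noncomputable def beta (t1 t2 t3 : RTree) : ℕ :=
  ((pos t3).filter fun v => decide (Iso t1 (graft v t3 t2))).length


end RTree

open RTree

/-- Isomorphism classes of rooted trees. -/
def TreeCls : Type := Quot RTree.Iso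

/-- The isomorphism class of a rooted tree. -/
def cls (t : RTree) : TreeCls := Quot.mk RTree.Iso t

/-- The number of vertices of (a representative of) an isomorphism class. -/
noncomputable def TreeCls.size (a : TreeCls) : ℕ := RTree.size a.out

/-- `α` on isomorphism classes. -/
noncomputable def alphaQ (a b c : TreeCls) : ℕ := RTree.alpha a.out b.out c.out

/-- `β` on isomorphism classes. -/
noncomputable def betaQ (a b c : TreeCls) : ℕ := RTree.beta a.out b.out c.out

open scoped BigOperators Classical

/-- A realization of the insertion-elimination Lie algebra: a complex Lie algebra `L`
with distinguished basis `{d} ∪ {D_t^+ : t} ∪ {D_t^- : t}` (indexed by isomorphism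
classes of rooted trees) satisfying the insertion-elimination relations. -/
structure IEData (L : Type*) [LieRing L] [LieAlgebra ℂ L] where
  /-- the grading element -/
  d : L
  /-- the insertion (growth) generators `D_t^+` -/
  Dp : TreeCls → L
  /-- the elimination generators `D_t^-` -/
  Dm : TreeCls → L
  basis_indep : LinearIndependent ℂ
    (Sum.elim (fun _ : Unit => d) (Sum.elim Dp Dm) : Unit ⊕ (TreeCls ⊕ TreeCls) → L)
  basis_span : Submodule.span ℂ
    (Set.range (Sum.elim (fun _ : Unit => d) (Sum.elim Dp Dm) :
      Unit ⊕ (TreeCls ⊕ TreeCls) → L)) = ⊤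
  bracket_d_p : ∀ t : TreeCls, ⁅d, Dp t⁆ = (t.size : ℂ) • Dp t
  bracket_d_m : ∀ t : TreeCls, ⁅d, Dm t⁆ = -(t.size : ℂ) • Dm t
  bracket_p_p : ∀ s t : TreeCls, ⁅Dp s, Dp t⁆ =
    ∑ᶠ r : TreeCls, ((betaQ r s t : ℂ) - (betaQ r t s : ℂ)) • Dp r
  bracket_m_m : ∀ s t : TreeCls, ⁅Dm s, Dm t⁆ =
    ∑ᶠ r : TreeCls, ((alphaQ t r s : ℂ) - (alphaQ s r t : ℂ)) • Dm r
  bracket_m_p : ∀ s t : TreeCls, ⁅Dm s, Dp t⁆ =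
    (∑ᶠ r : TreeCls, (alphaQ s t r : ℂ) • Dp r)
      + (∑ᶠ r : TreeCls, (betaQ s t r : ℂ) • Dm r)
      + (if s = t then d else 0)

namespace IEData

variable {L : Type*} [LieRing L] [LieAlgebra ℂ L] (D : IEData L)

/-- The graded piece `𝔤_n` of the insertion-elimination algebra. -/
noncomputable def gdeg (n : ℤ) : Submodule ℂ L :=
  if 0 < n then Submodule.span ℂ {x | ∃ t : RTree, (RTree.size t : ℤ) = n ∧ x = D.Dp (cls t)}
  else if n < 0 then
    Submodule.span ℂ {x | ∃ t : RTree, (RTree.size t : ℤ) = -n ∧ x = D.Dm (cls t)}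
  else Submodule.span ℂ {D.d}

/-- The positive part `𝔤⁺ = ⊕_{n>0} 𝔤_n`. -/
noncomputable def gplus : Submodule ℂ L :=
  Submodule.span ℂ (Set.range D.Dp)

/-- The negative part `𝔤⁻ = ⊕_{n<0} 𝔤_n`. -/
noncomputable def gminus : Submodule ℂ L :=
  Submodule.span ℂ (Set.range D.Dm)

end IEData

/-- The ladder rooted tree with `n + 1` vertices (a path rooted at one end). -/
def ladder : ℕ → RTree
  | 0 => RTree.node []
  | n + 1 => RTree.node [ladder n]


namespace RTree

theorem size_node (cs : List RTree) : size (node cs) = 1 + (cs.map size).sum := by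
  rw [size, List.attach_map_val]

theorem size_pos (t : RTree) : 0 < size t := by
  cases t; rw [size_node]; omega

theorem pos_node (cs : List RTree) : pos (node cs) = [] :: posAux cs 0 := rfl

theorem posAux_cons (c : RTree) (cs : List RTree) (i : ℕ) :
    posAux (c :: cs) i = (pos c).map (i :: ·) ++ posAux cs (i + 1) := rfl

theorem mem_posAux {cs : List RTree} {j : ℕ} {x : List ℕ} :
    x ∈ posAux cs j ↔ ∃ i, ∃ (h : i < cs.length), ∃ q ∈ pos cs[i], x = (j + i) :: q := by
  induction cs generalizing j with
  | nil => simp [posAux]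
  | cons c cs ih =>
    rw [posAux_cons]
    simp only [List.mem_append, List.mem_map, ih]
    constructor
    · rintro (⟨q, hq, rfl⟩ | ⟨i, hi, q, hq, rfl⟩)
      · exact ⟨0, by simp, q, by simpa using hq, by simp⟩
      · exact ⟨i + 1, by simpa using hi, q, by simpa using hq, by ring_nf⟩
    · rintro ⟨i, hi, q, hq, rfl⟩
      cases i with
      | zero => exact Or.inl ⟨q, by simpa using hq, by simp⟩
      | succ i =>
        exact Or.inr ⟨i, by simpa using hi, q, by simpa using hq, by ring_nf⟩

theorem mem_pos_node {cs : List RTree} {x : List ℕ} :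
    x ∈ pos (node cs) ↔ x = [] ∨ ∃ i, ∃ (h : i < cs.length), ∃ q ∈ pos cs[i], x = i :: q := by
  rw [pos_node]
  simp [mem_posAux]

theorem length_posAux (cs : List RTree) (j : ℕ) :
    (posAux cs j).length = (cs.map (fun c => (pos c).length)).sum := by
  induction cs generalizing j with
  | nil => simp [posAux]
  | cons c cs ih => simp [posAux_cons, ih]


theorem size_eq_length_pos : ∀ t : RTree, size t = (pos t).length
  | node cs => by
    rw [size, pos_node, List.length_cons, length_posAux]
    rw [← List.attach_map_val (l := cs) (f := fun c => (pos c).length)]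
    have h2 : (cs.attach.map fun c => size c.1) = cs.attach.map fun c => (pos c.1).length := by
      apply List.map_congr_left
      intro a _
      exact size_eq_length_pos a.1
    rw [h2]; omega
decreasing_by
  all_goals
    have h2 : sizeOf (RTree.node cs) = 1 + sizeOf cs := by simp
    have h1 := List.sizeOf_lt_of_mem a.2
    omega

theorem nodup_posAux {cs : List RTree} (h : ∀ c ∈ cs, (pos c).Nodup) (j : ℕ) :
    (posAux cs j).Nodup := by
  induction cs generalizing j with
  | nil => simp [posAux]
  | cons c cs ih =>
    rw [posAux_cons]
    apply List.Nodup.append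
    · exact (h c (by simp)).map (fun a b hab => by simpa using hab)
    · exact ih (fun c hc => h c (by simp [hc])) (j + 1)
    · intro x hx hx'
      rcases List.mem_map.1 hx with ⟨q, _, rfl⟩
      rcases mem_posAux.1 hx' with ⟨i, hi, q', hq', hx⟩
      simp only [List.cons.injEq] at hx
      omega

theorem nodup_pos : ∀ t : RTree, (pos t).Nodup
  | node cs => by
    rw [pos_node, List.nodup_cons]
    constructor
    · intro h
      rcases mem_posAux.1 h with ⟨i, hi, q, hq, h⟩
      simp at h
    · apply nodup_posAux
      intro c hc
      have := List.mem_attach cs ⟨c, hc⟩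
      exact nodup_pos c
decreasing_by
  all_goals
    have h2 : sizeOf (RTree.node cs) = 1 + sizeOf cs := by simp
    have h1 := List.sizeOf_lt_of_mem hc
    omega

theorem ladder_injective : Function.Injective ladder := by
  intro a b h
  induction a generalizing b with
  | zero => cases b with
    | zero => rfl
    | succ b => simp [ladder] at h
  | succ a ih =>
    cases b with
    | zero => simp [ladder] at h
    | succ b =>
      simp only [ladder, node.injEq, List.cons.injEq, and_true] at h
      exact congrArg Nat.succ (ih h)

theorem size_ladder (n : ℕ) : size (ladder n) = n + 1 := by
  induction n with
  | zero => simp [ladder, size_node]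
  | succ n ih => simp [ladder, size_node, ih]; omega

theorem pos_ladder (n : ℕ) :
    pos (ladder n) = (List.range (n+1)).map (fun i => List.replicate i 0) := by
  induction n with
  | zero => rw [show List.range 1 = [0] from rfl]; simp [ladder, pos_node, posAux]
  | succ n ih =>
    have h1 : pos (ladder (n+1)) = [] :: (pos (ladder n)).map (0 :: ·) := by
      simp [ladder, pos_node, posAux_cons, posAux]
    rw [h1, show List.range (n+1+1) = 0 :: (List.range (n+1)).map Nat.succ from
      List.range_succ_eq_map (n := n+1), ih]
    simp [List.map_map, Function.comp_def, List.replicate_succ]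

theorem mem_pos_ladder {n : ℕ} {p : List ℕ} :
    p ∈ pos (ladder n) ↔ ∃ i ≤ n, p = List.replicate i 0 := by
  rw [pos_ladder]
  simp only [List.mem_map, List.mem_range]
  constructor
  · rintro ⟨i, hi, rfl⟩; exact ⟨i, by omega, rfl⟩
  · rintro ⟨i, hi, rfl⟩; exact ⟨i, by omega, rfl⟩

theorem graft_deep (a b : ℕ) :
    graft (List.replicate b 0) (ladder b) (ladder a) = ladder (a + b + 1) := by
  induction b with
  | zero => simp [ladder, graft]
  | succ b ih =>
    show graft (0 :: List.replicate b 0) (node [ladder b]) (ladder a) = _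
    rw [graft]
    have h2 : (a + (b+1) + 1) = (a + b + 1) + 1 := by omega
    rw [h2]
    show node [graft (List.replicate b 0) (ladder b) (ladder a)] = node [ladder (a+b+1)]
    rw [ih]

theorem graft_eq_ladder {v : List ℕ} {t s : RTree} {n : ℕ} (hv : v ∈ pos t)
    (h : graft v t s = ladder n) :
    ∃ a b, s = ladder a ∧ t = ladder b ∧ v = List.replicate b 0 ∧ n = a + b + 1 := by
  induction v generalizing t n with
  | nil =>
    obtain ⟨cs⟩ := t
    rw [graft] at h
    cases n with
    | zero =>
      rw [show ladder 0 = node [] from rfl] at h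
      injection h with h
      simpa using congrArg List.length h
    | succ n =>
      rw [show ladder (n+1) = node [ladder n] from rfl] at h
      injection h with h
      have hcs : cs = [] ∧ s = ladder n := by
        cases cs with
        | nil => simpa using h
        | cons c cs' => simpa using congrArg List.length h
      exact ⟨n, 0, hcs.2, by simp [hcs.1, ladder], rfl, by omega⟩
  | cons i p ih =>
    obtain ⟨cs⟩ := t
    rw [graft] at h
    rcases mem_pos_node.1 hv with h' | ⟨i', hi', q, hq, hiq⟩
    · simp at h'
    injection hiq with e1 e2
    subst e1; subst e2
    cases n with
    | zero =>
      rw [show ladder 0 = node [] from rfl] at h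
      injection h with h
      have := congrArg List.length h
      simp only [List.length_modify, List.length_nil] at this
      omega
    | succ n =>
      rw [show ladder (n+1) = node [ladder n] from rfl] at h
      injection h with h
      have hlen : cs.length = 1 := by
        simpa [List.length_modify] using congrArg List.length h
      obtain ⟨c, rfl⟩ : ∃ c, cs = [c] := by
        cases cs with
        | nil => simp at hlen
        | cons c cs' => cases cs' with
          | nil => exact ⟨c, rfl⟩
          | cons d l => simp at hlen
      have hi0 : i = 0 := by simpa using hi'
      subst hi0
      have hc : graft p c s = ladder n := by simpa [List.modify] using h
      have hqc : p ∈ pos c := by simpa using hq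
      obtain ⟨a, b, hs, hcl, hp, hn⟩ := ih hqc hc
      exact ⟨a, b + 1, hs, by simp [ladder, hcl], by simp [List.replicate_succ, hp],
        by omega⟩

theorem size_graft {v : List ℕ} {t : RTree} (s : RTree) (hv : v ∈ pos t) :
    size (graft v t s) = size t + size s := by
  induction v generalizing t with
  | nil =>
    obtain ⟨cs⟩ := t
    rw [graft, size_node, size_node]
    simp; omega
  | cons i p ih =>
    obtain ⟨cs⟩ := t
    rcases mem_pos_node.1 hv with h' | ⟨i', hi', q, hq, hiq⟩
    · simp at h'
    injection hiq with e1 e2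
    subst e1; subst e2
    rw [graft, size_node, size_node]
    have key : ∀ (ds : List RTree) (j : ℕ) (hj : j < ds.length), p ∈ pos (ds[j]'hj) →
        ((ds.modify j (fun c => graft p c s)).map size).sum = (ds.map size).sum + size s := by
      intro ds
      induction ds with
      | nil => intro j hj _; simp at hj
      | cons c ds' ih2 =>
        intro j hj hmem
        cases j with
        | zero =>
          show ((graft p c s :: ds').map size).sum = _
          simp only [List.map_cons, List.sum_cons]
          rw [ih (by simpa using hmem)]
          omega
        | succ j =>
          show ((c :: ds'.modify j (fun c => graft p c s)).map size).sum = _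
          simp only [List.map_cons, List.sum_cons]
          rw [ih2 j (by simpa using hj) (by simpa using hmem)]
          omega
    rw [key cs _ hi' hq]
    omega

theorem dropLast_mem_pos {p : List ℕ} {t : RTree} (h : p ∈ pos t) : p.dropLast ∈ pos t := by
  induction p generalizing t with
  | nil => simpa using h
  | cons i q ih =>
    obtain ⟨cs⟩ := t
    rcases mem_pos_node.1 h with h' | ⟨i', hi', q', hq', hiq⟩
    · simp at h'
    injection hiq with e1 e2
    subst e1; subst e2
    cases q with
    | nil => simp [root_mem_pos]
    | cons a l =>
      rw [List.dropLast_cons_of_ne_nil (by simp)]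
      exact mem_pos_node.2 (Or.inr ⟨i, hi', (a :: l).dropLast, ih hq', rfl⟩)

theorem adj_self_dropLast {p : List ℕ} (h : p ≠ []) : adj p p.dropLast := Or.inl ⟨h, rfl⟩

theorem adj_length {p q : List ℕ} (h : adj p q) :
    p.length = q.length + 1 ∨ q.length = p.length + 1 := by
  rcases h with ⟨h1, rfl⟩ | ⟨h1, rfl⟩
  · left
    rw [List.length_dropLast]
    have : p.length ≠ 0 := by simpa using h1
    omega
  · right
    rw [List.length_dropLast]
    have : q.length ≠ 0 := by simpa using h1
    omega

theorem adj_symm {p q : List ℕ} (h : adj p q) : adj q p := h.symm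

section IsoLemmas

variable {s t : RTree} (f : {p // p ∈ pos s} ≃ {p // p ∈ pos t})

theorem apply_length_le
    (hroot : (f ⟨[], root_mem_pos s⟩).1 = [])
    (hadj : ∀ p q : {p // p ∈ pos s}, adj p.1 q.1 → adj (f p).1 (f q).1) :
    ∀ (n : ℕ) (p : {p // p ∈ pos s}), p.1.length = n → (f p).1.length ≤ n := by
  intro n
  induction n with
  | zero =>
    intro p hp
    have : p = ⟨[], root_mem_pos s⟩ := Subtype.ext (List.length_eq_zero_iff.1 hp)
    rw [this, hroot]
    simp
  | succ n ih =>
    intro p hp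
    have hpne : p.1 ≠ [] := by intro h; rw [h] at hp; simp at hp
    set q : {p // p ∈ pos s} := ⟨p.1.dropLast, dropLast_mem_pos p.2⟩ with hq
    have hlq : q.1.length = n := by
      show p.1.dropLast.length = n
      rw [List.length_dropLast]; omega
    have h1 : adj (f p).1 (f q).1 := hadj p q (adj_self_dropLast hpne)
    have h2 := ih q hlq
    rcases adj_length h1 with h | h <;> omega

theorem iso_apply_length
    (hroot : (f ⟨[], root_mem_pos s⟩).1 = [])
    (hadj : ∀ p q : {p // p ∈ pos s}, adj p.1 q.1 ↔ adj (f p).1 (f q).1)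
    (p : {p // p ∈ pos s}) : (f p).1.length = p.1.length := by
  have hroot' : (f.symm ⟨[], root_mem_pos t⟩).1 = [] := by
    have : f ⟨[], root_mem_pos s⟩ = ⟨[], root_mem_pos t⟩ := Subtype.ext hroot
    rw [← this, Equiv.symm_apply_apply]
  have h1 := apply_length_le f hroot (fun p q h => (hadj p q).1 h) p.1.length p rfl
  have h2 := apply_length_le f.symm hroot'
    (fun p q h => by
      have := (hadj (f.symm p) (f.symm q)).2
      simp only [Equiv.apply_symm_apply] at this
      exact this h) (f p).1.length (f p) rfl
  simp only [Equiv.symm_apply_apply] at h2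
  omega

end IsoLemmas

theorem iso_refl (t : RTree) : Iso t t := ⟨Equiv.refl _, rfl, fun _ _ => Iff.rfl⟩

theorem iso_symm {s t : RTree} (h : Iso s t) : Iso t s := by
  obtain ⟨f, hroot, hadj⟩ := h
  refine ⟨f.symm, ?_, ?_⟩
  · have : f ⟨[], root_mem_pos s⟩ = ⟨[], root_mem_pos t⟩ := Subtype.ext hroot
    rw [← this, Equiv.symm_apply_apply]
  · intro p q
    have := hadj (f.symm p) (f.symm q)
    simp only [Equiv.apply_symm_apply] at this
    exact this.symm

theorem iso_trans {s t u : RTree} (h1 : Iso s t) (h2 : Iso t u) : Iso s u := by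
  obtain ⟨f, hf, haf⟩ := h1
  obtain ⟨g, hg, hag⟩ := h2
  refine ⟨f.trans g, ?_, ?_⟩
  · show (g (f ⟨[], root_mem_pos s⟩)).1 = []
    have h : f ⟨[], root_mem_pos s⟩ = ⟨[], root_mem_pos t⟩ := Subtype.ext hf
    rw [h]; exact hg
  · intro p q
    exact (haf p q).trans (hag (f p) (f q))

theorem iso_equivalence : Equivalence Iso :=
  ⟨iso_refl, iso_symm, iso_trans⟩

/-- number of positions of given length -/
def cnt (t : RTree) (k : ℕ) : ℕ := (pos t).countP (fun p => decide (p.length = k))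

theorem nat_card_mem_list {α : Type*} [DecidableEq α] (l : List α) (h : l.Nodup) :
    Nat.card {p // p ∈ l} = l.length := by
  have e : {p // p ∈ l} ≃ {p // p ∈ l.toFinset} :=
    Equiv.subtypeEquivRight (by simp)
  rw [Nat.card_congr e, Nat.card_eq_fintype_card, Fintype.card_coe,
    List.toFinset_card_of_nodup h]

theorem size_iso {s t : RTree} (h : Iso s t) : size s = size t := by
  obtain ⟨f, -, -⟩ := h
  rw [size_eq_length_pos, size_eq_length_pos,
    ← nat_card_mem_list _ (nodup_pos s), ← nat_card_mem_list _ (nodup_pos t)]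
  exact Nat.card_congr f

theorem cnt_congr {s t : RTree} (h : Iso s t) (k : ℕ) : cnt s k = cnt t k := by
  obtain ⟨f, hroot, hadj⟩ := h
  have hlen := iso_apply_length f hroot hadj
  unfold cnt
  rw [List.countP_eq_length_filter, List.countP_eq_length_filter,
    ← List.toFinset_card_of_nodup ((nodup_pos s).filter _),
    ← List.toFinset_card_of_nodup ((nodup_pos t).filter _)]
  apply Finset.card_bij' (fun p hp => (f ⟨p, by
      rw [List.mem_toFinset, List.mem_filter] at hp; exact hp.1⟩).1)
    (fun p hp => (f.symm ⟨p, by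
      rw [List.mem_toFinset, List.mem_filter] at hp; exact hp.1⟩).1)
  · intro a ha
    simp only [Subtype.coe_eta, Equiv.symm_apply_apply]
  · intro a ha
    simp only [Subtype.coe_eta, Equiv.apply_symm_apply]
  · intro a ha
    rw [List.mem_toFinset, List.mem_filter] at ha ⊢
    refine ⟨Subtype.prop _, ?_⟩
    rw [hlen]
    exact ha.2
  · intro a ha
    rw [List.mem_toFinset, List.mem_filter] at ha ⊢
    obtain ⟨ha1, ha2⟩ := ha
    rw [decide_eq_true_eq] at ha2
    refine ⟨Subtype.prop _, ?_⟩
    rw [decide_eq_true_eq]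
    have := hlen (f.symm ⟨a, ha1⟩)
    rw [Equiv.apply_symm_apply] at this
    exact this.symm.trans ha2

theorem countP_eq_one_of_nodup {α : Type*} [DecidableEq α] {l : List α} (h : l.Nodup)
    {a : α} (ha : a ∈ l) : l.countP (fun x => decide (x = a)) = 1 := by
  induction l with
  | nil => simp at ha
  | cons b l ih =>
    rw [List.countP_cons]
    rcases List.mem_cons.1 ha with rfl | ha'
    · have h0 : l.countP (fun x => decide (x = a)) = 0 := by
        rw [List.countP_eq_zero]
        intro x hx
        simp only [decide_eq_true_eq]
        rintro rfl
        exact (List.nodup_cons.1 h).1 hx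
      simp [h0]
    · have hb : ¬ (b = a) := by
        rintro rfl
        exact (List.nodup_cons.1 h).1 ha'
      rw [ih (List.nodup_cons.1 h).2 ha']
      simp [hb]

theorem cnt_zero (t : RTree) : cnt t 0 = 1 := by
  unfold cnt
  rw [List.countP_congr (q := fun p => decide (p = ([] : List ℕ))) ?_]
  · exact countP_eq_one_of_nodup (nodup_pos t) (root_mem_pos t)
  · intro a _
    simp [List.length_eq_zero_iff]
theorem cntAux (cs : List RTree) (j k : ℕ) :
    (posAux cs j).countP (fun p => decide (p.length = k+1)) =
      (cs.map (fun c => cnt c k)).sum := by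
  induction cs generalizing j with
  | nil => simp [posAux]
  | cons c cs ih =>
    rw [posAux_cons, List.countP_append, List.countP_map, ih]
    simp only [List.map_cons, List.sum_cons]
    have hh : List.countP ((fun p => decide (p.length = k+1)) ∘ (fun q => j :: q)) (pos c)
        = cnt c k := by
      unfold cnt
      apply List.countP_congr
      intro a _
      simp [Function.comp]
    rw [hh]

theorem cnt_node (cs : List RTree) (k : ℕ) :
    cnt (node cs) (k+1) = (cs.map (fun c => cnt c k)).sum := by
  rw [show cnt (node cs) (k+1)
      = (pos (node cs)).countP (fun p => decide (p.length = k+1)) from rfl,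
    pos_node, List.countP_cons, cntAux]
  simp

theorem cnt_ladder (n k : ℕ) : cnt (ladder n) k = if k ≤ n then 1 else 0 := by
  induction n generalizing k with
  | zero =>
    cases k with
    | zero => simp [cnt_zero]
    | succ k =>
      rw [show ladder 0 = node [] from rfl, cnt_node]
      simp
  | succ n ih =>
    cases k with
    | zero => simp [cnt_zero]
    | succ k =>
      rw [show ladder (n+1) = node [ladder n] from rfl, cnt_node]
      simp only [List.map_cons, List.map_nil, List.sum_cons, List.sum_nil, add_zero, ih]
      simp [Nat.succ_le_succ_iff]

theorem eq_ladder_of_cnt : ∀ (u : RTree) (n : ℕ),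
    (∀ k, cnt u k = if k ≤ n then 1 else 0) → u = ladder n
  | node cs, n, h => by
    have h1 : cnt (node cs) 1 = cs.length := by
      rw [show (1:ℕ) = 0 + 1 from rfl, cnt_node]
      have : cs.map (fun c => cnt c 0) = cs.map (fun _ => 1) := by
        apply List.map_congr_left
        intro a _
        exact cnt_zero a
      rw [this]
      simp [List.map_const]
    cases n with
    | zero =>
      have : cs.length = 0 := by rw [← h1, h 1]; simp
      rw [List.length_eq_zero_iff.1 this]
      rfl
    | succ n =>
      have hlen : cs.length = 1 := by rw [← h1, h 1]; simp
      obtain ⟨c, hcs⟩ : ∃ c, cs = [c] := by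
        cases cs with
        | nil => simp at hlen
        | cons c cs' => cases cs' with
          | nil => exact ⟨c, rfl⟩
          | cons d l => simp at hlen
      have hc : ∀ k, cnt c k = if k ≤ n then 1 else 0 := by
        intro k
        have h2 := h (k+1)
        rw [cnt_node, hcs] at h2
        simpa [Nat.succ_le_succ_iff] using h2
      have hmem : c ∈ cs := by rw [hcs]; simp
      rw [hcs, eq_ladder_of_cnt c n hc]
      rfl
termination_by u n h => sizeOf u
decreasing_by
  have h2 : sizeOf (RTree.node cs) = 1 + sizeOf cs := by simp
  have h1 := List.sizeOf_lt_of_mem hmem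
  omega

theorem eq_ladder_of_iso {u : RTree} {n : ℕ} (h : Iso (ladder n) u) : u = ladder n :=
  eq_ladder_of_cnt u n (fun k => (cnt_congr (iso_symm h) k).trans (cnt_ladder n k))

open Classical in
theorem beta_ladder {s t : RTree} {m : ℕ} (h : size s + size t = m + 1) :
    beta (ladder m) s t =
      if (∃ a, s = ladder a) ∧ (∃ b, t = ladder b) then 1 else 0 := by
  unfold beta
  rw [List.filter_congr (q := fun v => decide (graft v t s = ladder m)) ?_]
  swap
  · intro v hv
    apply decide_eq_decide.2
    constructor
    · exact fun h' => eq_ladder_of_iso h'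
    · rintro h'
      rw [h']
      exact iso_refl _
  by_cases hcond : (∃ a, s = ladder a) ∧ (∃ b, t = ladder b)
  · obtain ⟨⟨a, rfl⟩, ⟨b, rfl⟩⟩ := hcond
    rw [if_pos ⟨⟨a, rfl⟩, ⟨b, rfl⟩⟩]
    have hm : m = a + b + 1 := by
      rw [size_ladder, size_ladder] at h
      omega
    subst hm
    rw [pos_ladder, List.filter_map, List.length_map, ← List.countP_eq_length_filter]
    have hptwise : ∀ i ∈ List.range (b+1),
        (((fun v => decide (graft v (ladder b) (ladder a) = ladder (a+b+1))) ∘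
          (fun i => List.replicate i 0)) i = true ↔ (decide (i = b) : Bool) = true) := by
      intro i hi
      rw [List.mem_range] at hi
      simp only [Function.comp, decide_eq_true_eq]
      constructor
      · intro h'
        obtain ⟨a', b', _, hlad, hrep, _⟩ :=
          graft_eq_ladder (mem_pos_ladder.2 ⟨i, by omega, rfl⟩) h'
        have hb : b' = b := ladder_injective hlad.symm
        subst hb
        have := congrArg List.length hrep
        simpa using this
      · rintro rfl
        exact graft_deep a _
    rw [List.countP_congr hptwise]
    rw [List.range_succ, List.countP_append]
    have h0 : (List.range b).countP (fun i => decide (i = b)) = 0 := by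
      rw [List.countP_eq_zero]
      intro a' ha'
      rw [List.mem_range] at ha'
      simp; omega
    rw [h0]
    simp
  · rw [if_neg hcond]
    rw [List.length_eq_zero_iff, List.filter_eq_nil_iff]
    intro v hv hdec
    rw [decide_eq_true_eq] at hdec
    obtain ⟨a, b, hs, ht, -, -⟩ := graft_eq_ladder hv hdec
    exact hcond ⟨⟨a, hs⟩, ⟨b, ht⟩⟩

theorem beta_comm {s t : RTree} {m : ℕ} (h : size s + size t = m + 1) :
    beta (ladder m) s t = beta (ladder m) t s := by
  classical
  rw [beta_ladder h, beta_ladder (by omega)]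
  exact if_congr and_comm rfl rfl

theorem beta_eq_zero_of_size {r s t : RTree} (h : size r ≠ size s + size t) :
    beta r s t = 0 := by
  classical
  unfold beta
  rw [List.length_eq_zero_iff, List.filter_eq_nil_iff]
  intro v hv hdec
  rw [decide_eq_true_eq] at hdec
  apply h
  rw [size_iso hdec, size_graft s hv]
  omega

theorem beta_congr_left {r r' s t : RTree} (h : Iso r r') :
    beta r s t = beta r' s t := by
  classical
  unfold beta
  rw [List.filter_congr]
  intro v hv
  apply decide_eq_decide.2
  exact ⟨fun h' => iso_trans (iso_symm h) h', fun h' => iso_trans h h'⟩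

end RTree

namespace RTree

open Classical in
theorem beta_ladder_eval {s t : RTree} {m : ℕ} (h : size s + size t = m + 1) :
    beta (ladder m) s t = beta (ladder m) t s := beta_comm h

end RTree

theorem iso_of_mk_eq {s t : RTree} (h : Quot.mk RTree.Iso s = Quot.mk RTree.Iso t) :
    RTree.Iso s t :=
  (RTree.iso_equivalence.eqvGen_iff).1 (Quot.eqvGen_exact h)

theorem out_iso (t : RTree) : RTree.Iso (cls t).out t :=
  iso_of_mk_eq (Quot.out_eq (cls t))

theorem betaQ_ladder_comm (m : ℕ) (a b : TreeCls) :
    betaQ (cls (ladder m)) a b = betaQ (cls (ladder m)) b a := by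
  have hr : RTree.Iso (cls (ladder m)).out (ladder m) := out_iso (ladder m)
  unfold betaQ
  rw [RTree.beta_congr_left hr, RTree.beta_congr_left hr]
  by_cases hsz : RTree.size a.out + RTree.size b.out = m + 1
  · exact RTree.beta_comm hsz
  · have h1 : RTree.size (ladder m) ≠ RTree.size a.out + RTree.size b.out := by
      rw [RTree.size_ladder]; omega
    have h2 : RTree.size (ladder m) ≠ RTree.size b.out + RTree.size a.out := by
      rw [RTree.size_ladder]; omega
    rw [RTree.beta_eq_zero_of_size h1, RTree.beta_eq_zero_of_size h2]

theorem size_ne_of_cls_eq_ladder {t : RTree} {m : ℕ} (h : cls t = cls (ladder m)) :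
    RTree.size t = m + 1 := by
  have := iso_of_mk_eq (h : Quot.mk RTree.Iso t = Quot.mk RTree.Iso (ladder m))
  rw [RTree.size_iso this, RTree.size_ladder]

namespace IEData

variable {L : Type*} [LieRing L] [LieAlgebra ℂ L] (D : IEData L)

/-- Generating set of the auxiliary subalgebra avoiding the ladder coordinate. -/
def genSet (m : ℕ) : Set L :=
  insert D.d {x | ∃ c : TreeCls, c ≠ cls (ladder m) ∧ x = D.Dp c}

theorem term_mem (m : ℕ) (a b r : TreeCls) :
    ((betaQ r a b : ℂ) - (betaQ r b a : ℂ)) • D.Dp r ∈ Submodule.span ℂ (D.genSet m) := by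
  by_cases hr : r = cls (ladder m)
  · subst hr
    rw [betaQ_ladder_comm]
    simp
  · exact Submodule.smul_mem _ _
      (Submodule.subset_span (Set.mem_insert_iff.2 (Or.inr ⟨r, hr, rfl⟩)))

theorem bracket_gen_mem (m : ℕ) :
    ∀ x ∈ D.genSet m, ∀ y ∈ D.genSet m, ⁅x, y⁆ ∈ Submodule.span ℂ (D.genSet m) := by
  intro x hx y hy
  rcases Set.mem_insert_iff.1 hx with rfl | ⟨a, ha, rfl⟩ <;>
    rcases Set.mem_insert_iff.1 hy with rfl | ⟨b, hb, rfl⟩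
  · rw [lie_self]; exact zero_mem _
  · rw [D.bracket_d_p]
    exact Submodule.smul_mem _ _
      (Submodule.subset_span (Set.mem_insert_iff.2 (Or.inr ⟨b, hb, rfl⟩)))
  · rw [← lie_skew, D.bracket_d_p]
    exact neg_mem (Submodule.smul_mem _ _
      (Submodule.subset_span (Set.mem_insert_iff.2 (Or.inr ⟨a, ha, rfl⟩))))
  · rw [D.bracket_p_p]
    by_cases hfin :
        (Function.support fun r => ((betaQ r a b : ℂ) - (betaQ r b a : ℂ)) • D.Dp r).Finite
    · rw [finsum_eq_sum _ hfin]
      exact Submodule.sum_mem _ (fun r _ => D.term_mem m a b r)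
    · rw [finsum_of_infinite_support hfin]
      exact zero_mem _

/-- The auxiliary Lie subalgebra. -/
noncomputable def Ksub (m : ℕ) : LieSubalgebra ℂ L :=
  { Submodule.span ℂ (D.genSet m) with
    lie_mem' := fun {x y} hx hy => by
      refine Submodule.span_induction₂
        (p := fun x y _ _ => ⁅x, y⁆ ∈ Submodule.span ℂ (D.genSet m))
        (fun a b ha hb => D.bracket_gen_mem m a ha b hb) ?_ ?_ ?_ ?_ ?_ ?_ hx hy
      · intro y _; rw [zero_lie]; exact zero_mem _
      · intro x _; rw [lie_zero]; exact zero_mem _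
      · intro a b c _ _ _ h1 h2; rw [add_lie]; exact add_mem h1 h2
      · intro a b c _ _ _ h1 h2; rw [lie_add]; exact add_mem h1 h2
      · intro r a b _ _ h1; rw [smul_lie]; exact Submodule.smul_mem _ _ h1
      · intro r a b _ _ h1; rw [lie_smul]; exact Submodule.smul_mem _ _ h1 }

theorem Dp_ladder_not_mem (m : ℕ) :
    D.Dp (cls (ladder m)) ∉ Submodule.span ℂ (D.genSet m) := by
  have himg : D.genSet m =
      (Sum.elim (fun _ : Unit => D.d) (Sum.elim D.Dp D.Dm)) ''
        ({Sum.inl ()} ∪ (fun c => Sum.inr (Sum.inl c)) '' {c | c ≠ cls (ladder m)}) := by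
    ext x
    constructor
    · intro hx
      rcases Set.mem_insert_iff.1 hx with rfl | ⟨c, hc, rfl⟩
      · exact ⟨Sum.inl (), Or.inl rfl, rfl⟩
      · exact ⟨Sum.inr (Sum.inl c), Or.inr ⟨c, hc, rfl⟩, rfl⟩
    · rintro ⟨i, hi, rfl⟩
      rcases hi with rfl | ⟨c, hc, rfl⟩
      · exact Set.mem_insert_iff.2 (Or.inl rfl)
      · exact Set.mem_insert_iff.2 (Or.inr ⟨c, hc, rfl⟩)
  have hx : (Sum.inr (Sum.inl (cls (ladder m))) : Unit ⊕ (TreeCls ⊕ TreeCls)) ∉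
      ({Sum.inl ()} ∪ (fun c => Sum.inr (Sum.inl c)) '' {c | c ≠ cls (ladder m)}) := by
    rintro (h | ⟨c, hc, h⟩)
    · simp at h
    · simp only [Sum.inr.injEq, Sum.inl.injEq] at h
      exact hc h
  have := D.basis_indep.notMem_span_image hx
  rw [himg]
  exact this

theorem gdeg_subset_Ksub (m : ℕ) {i : ℤ} (h0 : 0 ≤ i) (hm : i ≤ (m : ℤ)) :
    (D.gdeg i : Set L) ⊆ ↑(Submodule.span ℂ (D.genSet m)) := by
  rcases h0.lt_or_eq with hpos | hzero
  · have : D.gdeg i =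
        Submodule.span ℂ {x | ∃ t : RTree, (RTree.size t : ℤ) = i ∧ x = D.Dp (cls t)} := by
      unfold gdeg
      rw [if_pos hpos]
    rw [this]
    refine Submodule.span_le.2 ?_
    rintro x ⟨t, ht, rfl⟩
    apply Submodule.subset_span
    refine Set.mem_insert_iff.2 (Or.inr ⟨cls t, ?_, rfl⟩)
    intro hcls
    have := size_ne_of_cls_eq_ladder hcls
    omega
  · have : D.gdeg i = Submodule.span ℂ {D.d} := by
      unfold gdeg
      rw [if_neg (by omega), if_neg (by omega)]
    rw [this]
    refine Submodule.span_le.2 ?_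
    rintro x rfl
    exact Submodule.subset_span (Set.mem_insert_iff.2 (Or.inl rfl))

theorem not_mem_lieSpan_gdeg (m : ℕ) :
    D.Dp (cls (ladder m)) ∉
      LieSubalgebra.lieSpan ℂ L (⋃ i ∈ Set.Icc (0 : ℤ) (m : ℤ), (D.gdeg i : Set L)) := by
  intro hmem
  apply D.Dp_ladder_not_mem m
  have hle : LieSubalgebra.lieSpan ℂ L
      (⋃ i ∈ Set.Icc (0 : ℤ) (m : ℤ), (D.gdeg i : Set L)) ≤ D.Ksub m := by
    refine LieSubalgebra.lieSpan_le.2 ?_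
    intro x hx
    rw [Set.mem_iUnion₂] at hx
    obtain ⟨i, hi, hx⟩ := hx
    exact D.gdeg_subset_Ksub m hi.1 hi.2 hx
  exact hle hmem

theorem Dp_mem_gdeg (c : TreeCls) : D.Dp c ∈ D.gdeg (c.size : ℤ) := by
  have hpos : 0 < (c.size : ℤ) := by
    have : 0 < (c.size : ℕ) := RTree.size_pos c.out
    omega
  have : D.gdeg (c.size : ℤ) =
      Submodule.span ℂ {x | ∃ t : RTree, (RTree.size t : ℤ) = (c.size : ℤ) ∧ x = D.Dp (cls t)} := by
    unfold gdeg
    rw [if_pos hpos]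
  rw [this]
  refine Submodule.subset_span ⟨c.out, rfl, ?_⟩
  rw [show cls c.out = c from Quot.out_eq c]

end IEData



/-- For any `m > 0` and rooted trees `s, t` with `|s| + |t| = m + 1`, the coefficient
`β(ℓ_{m+1},s,t) - β(ℓ_{m+1},t,s)` of `D_{ℓ_{m+1}}^+` in `[D_s^+, D_t^+]` is zero;
consequently `D_{ℓ_{m+1}}^+` does not lie in the subalgebra generated by
`⊕_{0 ≤ i ≤ m} 𝔤_i`, and `𝔤⁺` is not finitely generated as a Lie algebra. -/
theorem ladder_coeff_zero_and_not_finitely_generated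
    {L : Type*} [LieRing L] [LieAlgebra ℂ L] (D : IEData L) (m : ℕ) (hm : 0 < m) :
    (∀ s t : RTree, RTree.size s + RTree.size t = m + 1 →
      RTree.beta (ladder m) s t = RTree.beta (ladder m) t s) ∧
    D.Dp (cls (ladder m)) ∉
      LieSubalgebra.lieSpan ℂ L (⋃ i ∈ Set.Icc (0 : ℤ) (m : ℤ), (D.gdeg i : Set L)) ∧
    ¬ ∃ S : Finset L, (↑S : Set L) ⊆ (D.gplus : Set L) ∧
      (D.gplus : Set L) ⊆ ↑(LieSubalgebra.lieSpan ℂ L ↑S) := by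
  classical
  refine ⟨fun s t h => RTree.beta_comm h, D.not_mem_lieSpan_gdeg m, ?_⟩
  rintro ⟨S, hS1, hS2⟩
  have hex : ∀ x : {x // x ∈ S}, ∃ F : Finset TreeCls,
      (x : L) ∈ Submodule.span ℂ (D.Dp '' ↑F) := by
    rintro ⟨x, hx⟩
    have hx' : x ∈ Submodule.span ℂ (Set.range D.Dp) := hS1 hx
    obtain ⟨T, hT, hxT⟩ := Submodule.mem_span_finite_of_mem_span hx'
    refine ⟨T.attach.image (fun y => Classical.choose (hT y.2)), ?_⟩
    have hsub : (↑T : Set L) ⊆ D.Dp '' ↑(T.attach.image (fun y => Classical.choose (hT y.2))) := by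
      intro y hy
      have hy' : y ∈ T := hy
      exact ⟨Classical.choose (hT hy'),
        Finset.mem_coe.2 (Finset.mem_image.2 ⟨⟨y, hy'⟩, Finset.mem_attach _ _, rfl⟩),
        Classical.choose_spec (hT hy')⟩
    exact Submodule.span_mono hsub hxT
  choose Fs hFs using hex
  set F : Finset TreeCls := S.attach.biUnion Fs with hF
  set m' : ℕ := F.sup (fun c => TreeCls.size c) + 1 with hm'
  have key : (↑S : Set L) ⊆
      ↑(LieSubalgebra.lieSpan ℂ L (⋃ i ∈ Set.Icc (0 : ℤ) (m' : ℤ), (D.gdeg i : Set L))) := by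
    intro x hx
    have h1 : x ∈ Submodule.span ℂ (D.Dp '' ↑F) :=
      Submodule.span_mono (Set.image_mono (fun c hc => Finset.mem_coe.2
        (Finset.mem_biUnion.2 ⟨⟨x, hx⟩, Finset.mem_attach _ _, Finset.mem_coe.1 hc⟩)))
        (hFs ⟨x, hx⟩)
    have h2 : Submodule.span ℂ (D.Dp '' ↑F) ≤
        (LieSubalgebra.lieSpan ℂ L
          (⋃ i ∈ Set.Icc (0 : ℤ) (m' : ℤ), (D.gdeg i : Set L))).toSubmodule := by
      refine Submodule.span_le.2 ?_
      rintro y ⟨c, hc, rfl⟩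
      apply LieSubalgebra.subset_lieSpan
      have hcle : TreeCls.size c ≤ F.sup (fun c => TreeCls.size c) :=
        Finset.le_sup (Finset.mem_coe.1 hc)
      refine Set.mem_biUnion (Set.mem_Icc.2 ⟨by exact_mod_cast Nat.zero_le _, ?_⟩)
        (D.Dp_mem_gdeg c)
      exact_mod_cast (by omega : TreeCls.size c ≤ m')
    exact h2 h1
  have hlie : LieSubalgebra.lieSpan ℂ L (↑S : Set L) ≤
      LieSubalgebra.lieSpan ℂ L (⋃ i ∈ Set.Icc (0 : ℤ) (m' : ℤ), (D.gdeg i : Set L)) :=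
    LieSubalgebra.lieSpan_le.2 key
  exact D.not_mem_lieSpan_gdeg m'
    (hlie (hS2 (Submodule.subset_span (Set.mem_range_self _))))

end IE
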